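/- arXiv:2308.03080 — 4 statements merged into one kernel-verified Lean document; each statement's English description precedes it below -/
import Mathlib

section
/- Let A_ℓ(z) = ∑_{n≥0} A(n,ℓ)·zⁿ ∈ ℚ⟦z⟧ be the ordinary generating function of peakless Motzkin paths of height at most ℓ. Then A₀(z)·(1−z) = 1, and for every ℓ ≥ 1 one has the continued-fraction-type recursion (1 − z + z² − z²·A_{ℓ−1}(z))·A_ℓ(z) = 1 in ℚ⟦z⟧. -/
/-- Steps of a Motzkin path: up, down, flat. -/
inductive Step : Type
  | U : Step
  | D : Step
  | F : Step
  deriving DecidableEq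

instance : Fintype Step :=
  ⟨{Step.U, Step.D, Step.F}, fun x => by cases x <;> simp⟩

/-- The value (vertical displacement) of a step. -/
def Step.val : Step → ℤ
  | .U => 1
  | .D => -1
  | .F => 0

/-- The partial sum of the first `i` step values of the word `w`. -/
def psum {n : ℕ} (w : Fin n → Step) (i : ℕ) : ℤ :=
  ∑ j : Fin n, if (j : ℕ) < i then (w j).val else 0

/-- A word is peakless if no up-step is immediately followed by a down-step. -/
def Peakless {n : ℕ} (w : Fin n → Step) : Prop :=
  ∀ i : ℕ, ∀ h : i + 1 < n,
    ¬(w ⟨i, Nat.lt_of_succ_lt h⟩ = Step.U ∧ w ⟨i + 1, h⟩ = Step.D)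

/-- `w` is a peakless Motzkin path from level `0` to level `k`:
all partial sums are nonnegative, the total sum is `k`, and there is no peak. -/
def IsPeaklessMotzkinTo {n : ℕ} (w : Fin n → Step) (k : ℤ) : Prop :=
  (∀ i : ℕ, 0 ≤ psum w i) ∧ psum w n = k ∧ Peakless w

/-- The height of a path: the maximum of its partial sums (0 for the empty path). -/
def height {n : ℕ} (w : Fin n → Step) : ℤ :=
  (Finset.range (n + 1)).sup' Finset.nonempty_range_add_one (psum w)

/-- `mTo n k`: the number of peakless Motzkin paths of length `n` from level `0` to level `k`. -/
noncomputable def mTo (n : ℕ) (k : ℤ) : ℕ :=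
  Nat.card {w : Fin n → Step // IsPeaklessMotzkinTo w k}

/-- `m n`: the number of peakless Motzkin paths of length `n`. -/
noncomputable def m (n : ℕ) : ℕ := mTo n 0

/-- `A n ℓ`: the number of peakless Motzkin paths of length `n` of height at most `ℓ`. -/
noncomputable def A (n ℓ : ℕ) : ℕ :=
  Nat.card {w : Fin n → Step // IsPeaklessMotzkinTo w 0 ∧ height w ≤ (ℓ : ℤ)}

/-- The ordinary generating function of peakless Motzkin paths of height at most `ℓ`. -/
noncomputable def Agf (ℓ : ℕ) : PowerSeries ℚ := PowerSeries.mk fun n => (A n ℓ : ℚ)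

/-!
Every nonempty peakless Motzkin path of height at most `h` factors uniquely as a primitive path
(one that returns to level `0` only at its end) followed by another such path. A primitive path
is either a single flat step or an arch `U q D`, where `q` is a path of height at most `h - 1`
that must be nonempty because `U D` is a peak. Counting by length gives
`A_h = 1 + (z + z² (A_{h-1} - 1)) A_h`; for `h = 0` there are no arches.
-/

open PowerSeries

section LengthGF

variable {α : Type*}

noncomputable def lengthGF (P : List α → Prop) : PowerSeries ℚ :=
  mk fun n => ({l | l.length = n ∧ P l}.ncard : ℚ)

lemma coeff_lengthGF (P : List α → Prop) (n : ℕ) :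
    coeff n (lengthGF P) = ({l | l.length = n ∧ P l}.ncard : ℚ) :=
  coeff_mk _ _

lemma finite_length_eq_and [Finite α] (P : List α → Prop) (n : ℕ) :
    {l | l.length = n ∧ P l}.Finite :=
  (List.finite_length_eq α n).subset fun _ hl => hl.1

lemma lengthGF_eq_zero {P : List α → Prop} (hP : ∀ l, ¬P l) : lengthGF P = 0 := by
  ext n
  simp [coeff_lengthGF, hP]

lemma lengthGF_eq_singleton (l₀ : List α) : lengthGF (· = l₀) = X ^ l₀.length := by
  ext n
  rw [coeff_lengthGF, coeff_X_pow]
  split_ifs with hn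
  · have : {l | l.length = n ∧ l = l₀} = {l₀} :=
      Set.ext fun l => ⟨fun hl => hl.2, fun hl => ⟨hl ▸ hn.symm, hl⟩⟩
    simp [this]
  · have : {l | l.length = n ∧ l = l₀} = ∅ :=
      Set.eq_empty_of_forall_notMem fun _ ⟨hl, hl₀⟩ => hn (hl₀ ▸ hl.symm)
    simp [this]

lemma lengthGF_or [Finite α] {P Q : List α → Prop} (hPQ : ∀ l, P l → ¬Q l) :
    lengthGF (fun l => P l ∨ Q l) = lengthGF P + lengthGF Q := by
  ext n
  have hunion : {l | l.length = n ∧ (P l ∨ Q l)} =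
      {l | l.length = n ∧ P l} ∪ {l | l.length = n ∧ Q l} := by
    ext l
    simp only [Set.mem_ofPred_eq, Set.mem_union, and_or_left]
  rw [map_add, coeff_lengthGF, coeff_lengthGF, coeff_lengthGF, hunion,
    Set.ncard_union_eq _ (finite_length_eq_and P n) (finite_length_eq_and Q n), Nat.cast_add]
  exact Set.disjoint_left.2 fun l hP hQ => hPQ l hP.2 hQ.2

lemma lengthGF_image {P : List α → Prop} {f : List α → List α} {k : ℕ}
    (hf : Function.Injective f) (hlen : ∀ l, (f l).length = l.length + k) :
    lengthGF (fun l => ∃ q, P q ∧ f q = l) = X ^ k * lengthGF P := by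
  ext n
  rw [coeff_X_pow_mul', coeff_lengthGF]
  split_ifs with hk
  · have himage : {l | l.length = n ∧ ∃ q, P q ∧ f q = l} =
        f '' {q | q.length = n - k ∧ P q} := by
      ext l
      constructor
      · rintro ⟨hl, q, hq, rfl⟩
        exact ⟨q, ⟨by rw [hlen] at hl; omega, hq⟩, rfl⟩
      · rintro ⟨q, ⟨hl, hq⟩, rfl⟩
        exact ⟨by rw [hlen]; omega, q, hq, rfl⟩
    rw [himage, Set.ncard_image_of_injective _ hf, coeff_lengthGF]
  · suffices {l | l.length = n ∧ ∃ q, P q ∧ f q = l} = ∅ by simp [this]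
    refine Set.eq_empty_of_forall_notMem ?_
    rintro _ ⟨hl, q, -, rfl⟩
    rw [hlen] at hl
    omega

open Finset.HasAntidiagonal in
lemma lengthGF_append [Finite α] {P Q : List α → Prop}
    (huniq : ∀ p r p' r', P p → Q r → P p' → Q r' → p ++ r = p' ++ r' → p = p') :
    lengthGF (fun l => ∃ p r, P p ∧ Q r ∧ p ++ r = l) = lengthGF P * lengthGF Q := by
  ext n
  let S (i : ℕ) : Set (List α) := {l | l.length = i ∧ P l}
  let T (j : ℕ) : Set (List α) := {l | l.length = j ∧ Q l}
  have (i : ℕ) : Finite (S i) := (finite_length_eq_and P i).to_subtype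
  have (j : ℕ) : Finite (T j) := (finite_length_eq_and Q j).to_subtype
  let concat (x : Σ ij : antidiagonal n, S ij.1.1 × T ij.1.2) :
      {l | l.length = n ∧ ∃ p r, P p ∧ Q r ∧ p ++ r = l} :=
    ⟨x.2.1 ++ x.2.2, by
      rw [Set.mem_ofPred_eq, List.length_append, x.2.1.2.1, x.2.2.2.1]
      exact ⟨mem_antidiagonal.1 x.1.2, _, _, x.2.1.2.2, x.2.2.2.2, rfl⟩⟩
  have hconcat : Function.Bijective concat := by
    constructor
    · rintro ⟨⟨⟨i, j⟩, hij⟩, ⟨p, hpi, hp⟩, ⟨r, hrj, hr⟩⟩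
        ⟨⟨⟨i', j'⟩, hij'⟩, ⟨p', hpi', hp'⟩, ⟨r', hrj', hr'⟩⟩ h
      have hpr : p ++ r = p' ++ r' := congrArg Subtype.val h
      obtain rfl : p = p' := huniq p r p' r' hp hr hp' hr' hpr
      obtain rfl : r = r' := List.append_cancel_left hpr
      clear h hpr
      simp only at hpi hrj hpi' hrj'
      subst hpi hrj hpi' hrj'
      rfl
    · rintro ⟨l, hl, p, r, hp, hr, rfl⟩
      have hlen : p.length + r.length = n := by simpa using hl
      exact ⟨⟨⟨(p.length, r.length), mem_antidiagonal.2 hlen⟩,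
        ⟨p, rfl, hp⟩, ⟨r, rfl, hr⟩⟩, rfl⟩
  rw [coeff_mul, coeff_lengthGF, ← Nat.card_coe_set_eq,
    ← Nat.card_congr (Equiv.ofBijective _ hconcat), Nat.card_sigma, Nat.cast_sum,
    ← Finset.sum_coe_sort (antidiagonal n)]
  simp only [Nat.card_prod, Nat.cast_mul, coeff_lengthGF, Nat.card_coe_set_eq, S, T]

lemma ncard_length_eq_and (P : List α → Prop) (n : ℕ) :
    {l : List α | l.length = n ∧ P l}.ncard =
      Nat.card {w : Fin n → α // P (List.ofFn w)} := by
  have himage : {l | l.length = n ∧ P l} = List.ofFn '' {w : Fin n → α | P (List.ofFn w)} := by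
    ext l
    constructor
    · rintro ⟨rfl, hl⟩
      exact ⟨l.get, by simpa [List.ofFn_get], List.ofFn_get l⟩
    · rintro ⟨w, hw, rfl⟩
      exact ⟨List.length_ofFn, hw⟩
  rw [himage, Set.ncard_image_of_injective _ List.ofFn_injective, ← Nat.card_coe_set_eq]
  rfl

end LengthGF

lemma List.prefix_append_iff {α : Type*} {s p r : List α} :
    s <+: p ++ r ↔ s <+: p ∨ ∃ t, t <+: r ∧ s = p ++ t := by
  constructor
  · intro hs
    rcases List.prefix_or_prefix_of_prefix hs (List.prefix_append p r) with h | ⟨t, rfl⟩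
    · exact .inl h
    · exact .inr ⟨t, (List.prefix_append_right_inj p).1 hs, rfl⟩
  · rintro (h | ⟨t, ht, rfl⟩)
    · exact h.trans (List.prefix_append p r)
    · exact (List.prefix_append_right_inj p).2 ht

open Step

@[simp] lemma Step.val_U : U.val = 1 := rfl
@[simp] lemma Step.val_D : D.val = -1 := rfl
@[simp] lemma Step.val_F : F.val = 0 := rfl

def level (l : List Step) : ℤ := (l.map Step.val).sum

@[simp] lemma level_nil : level [] = 0 := rfl

@[simp] lemma level_cons (x : Step) (l : List Step) : level (x :: l) = x.val + level l :=
  List.sum_cons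

@[simp] lemma level_append (l₁ l₂ : List Step) :
    level (l₁ ++ l₂) = level l₁ + level l₂ := by
  simp [level]

/-- Peakless Motzkin paths of height at most `h` as lists of steps; the levels of the prefixes
play the role of the partial sums `psum`. -/
structure IsBoundedPath (h : ℤ) (l : List Step) : Prop where
  level_prefix_nonneg : ∀ p, p <+: l → 0 ≤ level p
  level_prefix_le : ∀ p, p <+: l → level p ≤ h
  level_eq_zero : level l = 0
  peakless : l.IsChain fun x y => ¬(x = U ∧ y = D)

structure IsPrimitive (h : ℤ) (p : List Step) : Prop extends IsBoundedPath h p where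
  ne_nil : p ≠ []
  eq_of_prefix : ∀ s, s <+: p → s ≠ [] → level s = 0 → s = p

section Paths

variable {h : ℤ} {l p q : List Step}

namespace IsBoundedPath

lemma bound_nonneg (hl : IsBoundedPath h l) : 0 ≤ h :=
  (hl.level_prefix_nonneg [] List.nil_prefix).trans (hl.level_prefix_le [] List.nil_prefix)

lemma head_ne_D (hl : IsBoundedPath h l) : ∀ x ∈ l.head?, x ≠ D := by
  rintro x hx rfl
  obtain ⟨t, rfl⟩ := List.head?_eq_some_iff.1 hx
  have := hl.level_prefix_nonneg [D] (List.prefix_cons_iff.2 (.inr ⟨[], rfl, List.nil_prefix⟩))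
  simp at this

lemma getLast_ne_U (hl : IsBoundedPath h l) : ∀ x ∈ l.getLast?, x ≠ U := by
  rintro x hx rfl
  obtain ⟨t, rfl⟩ := List.getLast?_eq_some_iff.1 hx
  have ht := hl.level_prefix_nonneg t (List.prefix_append t [U])
  have hl0 := hl.level_eq_zero
  simp only [level_append, level_cons, val_U, level_nil] at hl0
  omega

end IsBoundedPath

lemma isBoundedPath_nil (hh : 0 ≤ h) : IsBoundedPath h [] where
  level_prefix_nonneg p hp := by simp [List.prefix_nil.1 hp]
  level_prefix_le p hp := by simp [List.prefix_nil.1 hp, hh]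
  level_eq_zero := rfl
  peakless := .nil

lemma isBoundedPath_append {r : List Step} (hp : level p = 0) :
    IsBoundedPath h (p ++ r) ↔ IsBoundedPath h p ∧ IsBoundedPath h r := by
  constructor
  · intro hpr
    have hprefix {s} (hs : s <+: p) : s <+: p ++ r := hs.trans (List.prefix_append p r)
    have hshift {t} (ht : t <+: r) : p ++ t <+: p ++ r := (List.prefix_append_right_inj p).2 ht
    have hchain := List.isChain_append.1 hpr.peakless
    refine ⟨⟨fun s hs => hpr.level_prefix_nonneg s (hprefix hs),
      fun s hs => hpr.level_prefix_le s (hprefix hs), hp, hchain.1⟩,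
      ⟨fun t ht => ?_, fun t ht => ?_, ?_, hchain.2.1⟩⟩
    · simpa [hp] using hpr.level_prefix_nonneg _ (hshift ht)
    · simpa [hp] using hpr.level_prefix_le _ (hshift ht)
    · simpa [hp] using hpr.level_eq_zero
  · rintro ⟨hp', hr⟩
    refine ⟨fun s hs => ?_, fun s hs => ?_, by simp [hp, hr.level_eq_zero], List.isChain_append.2
      ⟨hp'.peakless, hr.peakless, fun x hx _ _ hxU => hp'.getLast_ne_U x hx hxU.1⟩⟩
    · rcases List.prefix_append_iff.1 hs with hs | ⟨t, ht, rfl⟩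
      · exact hp'.level_prefix_nonneg s hs
      · simpa [hp] using hr.level_prefix_nonneg t ht
    · rcases List.prefix_append_iff.1 hs with hs | ⟨t, ht, rfl⟩
      · exact hp'.level_prefix_le s hs
      · simpa [hp] using hr.level_prefix_le t ht

lemma IsPrimitive.eq_of_append_eq {p' r r' : List Step} (hp : IsPrimitive h p)
    (hp' : IsPrimitive h p') (e : p ++ r = p' ++ r') : p = p' := by
  rcases List.prefix_or_prefix_of_prefix (e ▸ List.prefix_append p r) (List.prefix_append p' r')
    with hpp' | hp'p
  · exact hp'.eq_of_prefix p hpp' hp.ne_nil hp.level_eq_zero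
  · exact (hp.eq_of_prefix p' hp'p hp'.ne_nil hp'.level_eq_zero).symm

lemma IsBoundedPath.exists_isPrimitive_append (hl : IsBoundedPath h l) (hne : l ≠ []) :
    ∃ p r, IsPrimitive h p ∧ IsBoundedPath h r ∧ p ++ r = l := by
  have hlength : 0 < l.length ∧ level (l.take l.length) = 0 :=
    ⟨List.length_pos_iff.2 hne, by simpa using hl.level_eq_zero⟩
  have hex : ∃ k, 0 < k ∧ level (l.take k) = 0 := ⟨_, hlength⟩
  classical
  set k := Nat.find hex
  obtain ⟨hk, hk0⟩ : 0 < k ∧ level (l.take k) = 0 := Nat.find_spec hex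
  have hkl : k ≤ l.length := Nat.find_min' hex hlength
  obtain ⟨hp, hr⟩ := (isBoundedPath_append hk0).1 ((l.take_append_drop k).symm ▸ hl)
  refine ⟨l.take k, l.drop k, ⟨hp, by simp [List.take_eq_nil_iff, hne, hk.ne'], ?_⟩, hr,
    l.take_append_drop k⟩
  intro s hs hsne hs0
  have hsl : s = l.take s.length := List.prefix_iff_eq_take.1 (hs.trans (l.take_prefix k))
  refine hs.eq_of_length (le_antisymm hs.length_le ?_)
  rw [List.length_take_of_le hkl]
  exact Nat.find_min' hex ⟨List.length_pos_iff.2 hsne, hsl ▸ hs0⟩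

lemma isPrimitive_F (hh : 0 ≤ h) : IsPrimitive h [F] := by
  have hprefix {s} (hs : s <+: [F]) : s = [] ∨ s = [F] := by
    rcases List.prefix_cons_iff.1 hs with rfl | ⟨t, rfl, ht⟩
    · exact .inl rfl
    · rw [List.prefix_nil.1 ht]; exact .inr rfl
  refine ⟨⟨fun s hs => ?_, fun s hs => ?_, rfl, List.isChain_singleton F⟩,
    List.cons_ne_nil _ _, fun s hs hne _ => (hprefix hs).resolve_left hne⟩ <;>
  rcases hprefix hs with rfl | rfl <;> simp [hh]

lemma isPrimitive_arch (hq : IsBoundedPath (h - 1) q) (hne : q ≠ []) :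
    IsPrimitive h (U :: (q ++ [D])) := by
  have hprefix {s} (hs : s <+: U :: (q ++ [D])) :
      s = [] ∨ s = U :: (q ++ [D]) ∨ ∃ t, t <+: q ∧ s = U :: t := by
    rcases List.prefix_cons_iff.1 hs with rfl | ⟨t, rfl, ht⟩
    · exact .inl rfl
    · rcases List.prefix_concat_iff.1 ht with rfl | ht
      · exact .inr (.inl rfl)
      · exact .inr (.inr ⟨t, ht, rfl⟩)
  have hlevel : level (U :: (q ++ [D])) = 0 := by simp [hq.level_eq_zero]
  have hh := hq.bound_nonneg
  refine ⟨⟨fun s hs => ?_, fun s hs => ?_, hlevel, ?_⟩, List.cons_ne_nil _ _,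
    fun s hs hsne hs0 => ?_⟩
  · rcases hprefix hs with rfl | rfl | ⟨t, ht, rfl⟩
    · rfl
    · exact hlevel.ge
    · have := hq.level_prefix_nonneg t ht
      simp only [level_cons, val_U]
      omega
  · rcases hprefix hs with rfl | rfl | ⟨t, ht, rfl⟩
    · exact hh.trans (by omega)
    · rw [hlevel]; omega
    · have := hq.level_prefix_le t ht
      simp only [level_cons, val_U]
      omega
  · obtain ⟨x, t, rfl⟩ := List.exists_cons_of_ne_nil hne
    refine List.isChain_cons.2 ⟨fun y hy hUD => hq.head_ne_D y ?_ hUD.2, List.isChain_append.2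
      ⟨hq.peakless, List.isChain_singleton D, fun x hx _ _ hUD => hq.getLast_ne_U x hx hUD.1⟩⟩
    simpa using hy
  · rcases hprefix hs with rfl | rfl | ⟨t, ht, rfl⟩
    · exact absurd rfl hsne
    · rfl
    · have := hq.level_prefix_nonneg t ht
      simp only [level_cons, val_U] at hs0
      omega

lemma IsPrimitive.eq_F_or_arch (hp : IsPrimitive h p) :
    p = [F] ∨ ∃ q, (IsBoundedPath (h - 1) q ∧ q ≠ []) ∧ U :: (q ++ [D]) = p := by
  obtain ⟨x, t, rfl⟩ := List.exists_cons_of_ne_nil hp.ne_nil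
  cases x with
  | D => exact absurd rfl (hp.head_ne_D D rfl)
  | F =>
    have hF : [F] <+: F :: t := List.prefix_cons_iff.2 (.inr ⟨[], rfl, List.nil_prefix⟩)
    exact .inl (hp.eq_of_prefix [F] hF (List.cons_ne_nil _ _) rfl).symm
  | U =>
    right
    obtain rfl | ⟨q, y, rfl⟩ := t.eq_nil_or_concat'
    · simpa using hp.level_eq_zero
    have hinner {s} (hs : s <+: q) : 0 ≤ level s ∧ level s ≤ h - 1 := by
      have hs' : U :: s <+: U :: (q ++ [y]) :=
        List.prefix_cons_iff.2 (.inr ⟨s, rfl, hs.trans (List.prefix_append q [y])⟩)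
      have hne : level (U :: s) ≠ 0 := fun h0 => by
        have := congrArg List.length (hp.eq_of_prefix _ hs' (List.cons_ne_nil _ _) h0)
        simp only [List.length_cons, List.length_append] at this
        have := hs.length_le
        omega
      have hnonneg := hp.level_prefix_nonneg _ hs'
      have hle := hp.level_prefix_le _ hs'
      simp only [level_cons, val_U] at hne hnonneg hle
      omega
    have hq0 := (hinner (List.prefix_refl q)).1
    have hlevel : 1 + (level q + y.val) = 0 := by simpa using hp.level_eq_zero
    obtain rfl : y = D := by
      cases y
      · simp only [val_U] at hlevel; omega
      · rfl
      · simp only [val_F] at hlevel; omega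
    refine ⟨q, ⟨⟨fun s hs => (hinner hs).1, fun s hs => (hinner hs).2, by simpa using hlevel,
      ?_⟩, ?_⟩, rfl⟩
    · exact (List.isChain_append.1 (List.isChain_cons.1 hp.peakless).2).1
    · rintro rfl
      simpa using hp.peakless

lemma isBoundedPath_iff (hh : 0 ≤ h) :
    IsBoundedPath h l ↔
      l = [] ∨ ∃ p r, IsPrimitive h p ∧ IsBoundedPath h r ∧ p ++ r = l := by
  refine ⟨fun hl => ?_, ?_⟩
  · rcases eq_or_ne l [] with rfl | hne
    · exact .inl rfl
    · exact .inr (hl.exists_isPrimitive_append hne)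
  · rintro (rfl | ⟨p, r, hp, hr, rfl⟩)
    · exact isBoundedPath_nil hh
    · exact (isBoundedPath_append hp.level_eq_zero).2 ⟨hp.toIsBoundedPath, hr⟩

lemma isPrimitive_iff (hh : 0 ≤ h) :
    IsPrimitive h p ↔
      p = [F] ∨ ∃ q, (IsBoundedPath (h - 1) q ∧ q ≠ []) ∧ U :: (q ++ [D]) = p := by
  refine ⟨IsPrimitive.eq_F_or_arch, ?_⟩
  rintro (rfl | ⟨q, ⟨hq, hne⟩, rfl⟩)
  · exact isPrimitive_F hh
  · exact isPrimitive_arch hq hne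

lemma lengthGF_isBoundedPath (hh : 0 ≤ h) :
    lengthGF (IsBoundedPath h) = 1 + lengthGF (IsPrimitive h) * lengthGF (IsBoundedPath h) := by
  conv_lhs => rw [show IsBoundedPath h = _ from funext fun l => propext (isBoundedPath_iff hh)]
  rw [lengthGF_or, lengthGF_eq_singleton, List.length_nil, pow_zero,
    lengthGF_append fun p r p' r' hp _ hp' _ e => hp.eq_of_append_eq hp' e]
  rintro l rfl ⟨p, r, hp, -, e⟩
  exact hp.ne_nil (List.append_eq_nil_iff.1 e).1

lemma lengthGF_isBoundedPath_and_ne_nil (hh : 0 ≤ h) :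
    lengthGF (fun l => IsBoundedPath h l ∧ l ≠ []) = lengthGF (IsBoundedPath h) - 1 := by
  have hsplit : IsBoundedPath h = fun l => l = [] ∨ (IsBoundedPath h l ∧ l ≠ []) :=
    funext fun l => propext ⟨fun hl => (eq_or_ne l []).imp_right (⟨hl, ·⟩),
      by rintro (rfl | ⟨hl, -⟩); exacts [isBoundedPath_nil hh, hl]⟩
  conv_rhs => rw [hsplit, lengthGF_or fun l hl hl' => hl'.2 hl, lengthGF_eq_singleton,
    List.length_nil, pow_zero, add_sub_cancel_left]

lemma lengthGF_isPrimitive (hh : 0 ≤ h) :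
    lengthGF (IsPrimitive h) =
      X + X ^ 2 * lengthGF (fun q => IsBoundedPath (h - 1) q ∧ q ≠ []) := by
  rw [show IsPrimitive h = _ from funext fun p => propext (isPrimitive_iff hh), lengthGF_or,
    lengthGF_eq_singleton, List.length_singleton, pow_one,
    lengthGF_image (k := 2) (fun q q' e => by simpa using e) fun q => by simp]
  rintro p rfl ⟨q, -, e⟩
  simp at e

end Paths

lemma psum_eq_level_take {n : ℕ} (w : Fin n → Step) (i : ℕ) :
    psum w i = level ((List.ofFn w).take i) := by
  rw [psum, level, List.map_take, List.map_ofFn, List.sum_take_ofFn, Finset.sum_filter]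
  rfl

lemma peakless_iff_isChain {n : ℕ} (w : Fin n → Step) :
    Peakless w ↔ (List.ofFn w).IsChain fun x y => ¬(x = U ∧ y = D) := by
  simp [Peakless, List.isChain_iff_getElem]

lemma isPeaklessMotzkinTo_zero_and_height_le_iff {n : ℕ} (w : Fin n → Step) (h : ℤ) :
    IsPeaklessMotzkinTo w 0 ∧ height w ≤ h ↔ IsBoundedPath h (List.ofFn w) := by
  have hprefix {s} (hs : s <+: List.ofFn w) : ∃ i ≤ n, level s = psum w i :=
    ⟨s.length, by simpa using hs.length_le,
      by rw [psum_eq_level_take, ← List.prefix_iff_eq_take.1 hs]⟩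
  have htake : (List.ofFn w).take n = List.ofFn w := List.take_of_length_le (by simp)
  constructor
  · rintro ⟨⟨hnonneg, hlevel, hpeak⟩, hheight⟩
    refine ⟨fun s hs => ?_, fun s hs => ?_, ?_, (peakless_iff_isChain w).1 hpeak⟩
    · obtain ⟨i, -, hi⟩ := hprefix hs
      exact hi ▸ hnonneg i
    · obtain ⟨i, hi, hsi⟩ := hprefix hs
      exact hsi ▸ (Finset.le_sup' (psum w) (Finset.mem_range.2 (Nat.lt_succ_of_le hi))).trans
        hheight
    · simpa [psum_eq_level_take, htake] using hlevel
  · intro hl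
    refine ⟨⟨fun i => ?_, by simpa [psum_eq_level_take, htake] using hl.level_eq_zero,
      (peakless_iff_isChain w).2 hl.peakless⟩, Finset.sup'_le _ _ fun i _ => ?_⟩
    · rw [psum_eq_level_take]; exact hl.level_prefix_nonneg _ (List.take_prefix _ _)
    · rw [psum_eq_level_take]; exact hl.level_prefix_le _ (List.take_prefix _ _)

lemma Agf_eq_lengthGF (ℓ : ℕ) : Agf ℓ = lengthGF (IsBoundedPath ℓ) := by
  ext n
  rw [coeff_lengthGF, ncard_length_eq_and, Agf, coeff_mk, A, Nat.card_congr
    (Equiv.subtypeEquivRight fun w => isPeaklessMotzkinTo_zero_and_height_le_iff w ℓ)]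

/-- `A₀(z)·(1−z) = 1`, and for every `ℓ ≥ 1` the continued-fraction-type recursion
`(1 − z + z² − z²·A_{ℓ−1}(z))·A_ℓ(z) = 1` holds in `ℚ⟦z⟧`. -/
theorem Agf_continued_fraction_recursion :
    Agf 0 * (1 - PowerSeries.X) = 1 ∧
    ∀ ℓ : ℕ, 1 ≤ ℓ →
      (1 - PowerSeries.X + PowerSeries.X ^ 2 - PowerSeries.X ^ 2 * Agf (ℓ - 1)) * Agf ℓ = 1 := by
  have hrec (ℓ : ℕ) :
      Agf ℓ = 1 + (X + X ^ 2 * lengthGF fun q => IsBoundedPath (ℓ - 1) q ∧ q ≠ []) * Agf ℓ := by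
    rw [Agf_eq_lengthGF, ← lengthGF_isPrimitive ℓ.cast_nonneg,
      ← lengthGF_isBoundedPath ℓ.cast_nonneg]
  refine ⟨?_, fun ℓ hℓ => ?_⟩
  · have h0 := hrec 0
    rw [lengthGF_eq_zero fun q hq => by simpa using hq.1.bound_nonneg] at h0
    linear_combination h0
  · have hℓ' : ((ℓ - 1 : ℕ) : ℤ) = ℓ - 1 := by omega
    have h := hrec ℓ
    rw [← hℓ', lengthGF_isBoundedPath_and_ne_nil (ℓ - 1).cast_nonneg, ← Agf_eq_lengthGF]
      at h
    linear_combination h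
end

section
/- For every real z with 0 < z < ρ = (3−√5)/2 and every integer ℓ ≥ 1, define B_ℓ(z) = (1/z)·(s₁(z)^{ℓ+1} − s₂(z)^{ℓ+1})/(s₁(z)^{ℓ+2} − s₂(z)^{ℓ+2}) (also for ℓ = 0). Then for every ℓ ≥ 1, B_ℓ(z) = 1/(1 − z + z² − z²·B_{ℓ−1}(z)), where all denominators appearing are nonzero. -/
noncomputable def W (z : ℝ) : ℝ := Real.sqrt ((1 + z + z ^ 2) * (1 - 3 * z + z ^ 2))

noncomputable def s1 (z : ℝ) : ℝ := (1 - z + z ^ 2 + W z) / (2 * z)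

noncomputable def s2 (z : ℝ) : ℝ := (1 - z + z ^ 2 - W z) / (2 * z)

/-- `B ℓ z = (1/z)·(s₁^{ℓ+1} − s₂^{ℓ+1})/(s₁^{ℓ+2} − s₂^{ℓ+2})`. -/
noncomputable def B (ℓ : ℕ) (z : ℝ) : ℝ :=
  1 / z * (s1 z ^ (ℓ + 1) - s2 z ^ (ℓ + 1)) / (s1 z ^ (ℓ + 2) - s2 z ^ (ℓ + 2))

/-- For `0 < z < ρ` and `ℓ ≥ 1`: `B_ℓ(z) = 1/(1 − z + z² − z²·B_{ℓ−1}(z))`,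
with all denominators appearing nonzero. -/
theorem B_continued_fraction_recursion (z : ℝ)
    (hz0 : 0 < z) (hz1 : z < (3 - Real.sqrt 5) / 2) (ℓ : ℕ) (hℓ : 1 ≤ ℓ) :
    z ≠ 0 ∧
    s1 z ^ (ℓ + 1) - s2 z ^ (ℓ + 1) ≠ 0 ∧
    s1 z ^ (ℓ + 2) - s2 z ^ (ℓ + 2) ≠ 0 ∧
    1 - z + z ^ 2 - z ^ 2 * B (ℓ - 1) z ≠ 0 ∧
    B ℓ z = 1 / (1 - z + z ^ 2 - z ^ 2 * B (ℓ - 1) z) := by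
  have hzne : z ≠ 0 := ne_of_gt hz0
  have h5 : (Real.sqrt 5) ^ 2 = 5 := Real.sq_sqrt (by norm_num)
  have h5nn : (0:ℝ) ≤ Real.sqrt 5 := Real.sqrt_nonneg 5
  have hq : 0 < 1 - 3 * z + z ^ 2 := by nlinarith
  have hp : 0 < 1 + z + z ^ 2 := by nlinarith
  have hprod : 0 < (1 + z + z ^ 2) * (1 - 3 * z + z ^ 2) := mul_pos hp hq
  have hW : 0 < W z := Real.sqrt_pos.mpr hprod
  have hW2 : W z ^ 2 = (1 + z + z ^ 2) * (1 - 3 * z + z ^ 2) :=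
    Real.sq_sqrt hprod.le
  have hA : 0 < 1 - z + z ^ 2 := by nlinarith
  set a := s1 z with ha_def
  set b := s2 z with hb_def
  have hab : a * b = 1 := by
    rw [ha_def, hb_def, s1, s2]
    field_simp
    linear_combination -hW2
  have hsum : a + b = (1 - z + z ^ 2) / z := by
    rw [ha_def, hb_def, s1, s2]; field_simp; ring
  have hba : b < a := by
    rw [ha_def, hb_def, s1, s2]
    exact div_lt_div_of_pos_right (by linarith) (by linarith)
  have ha0 : 0 < a := by
    rw [ha_def, s1]
    positivity
  have hb0 : 0 < b := by
    by_contra h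
    push_neg at h
    nlinarith
  have hpow : ∀ n : ℕ, 0 < a ^ (n + 1) - b ^ (n + 1) := by
    intro n
    have := pow_lt_pow_left₀ hba hb0.le (n := n + 1) (by omega)
    linarith
  obtain ⟨m, rfl⟩ : ∃ m, ℓ = m + 1 := ⟨ℓ - 1, by omega⟩
  have h1 := (hpow (m + 1)).ne'
  have h2 := (hpow (m + 2)).ne'
  have h3 := (hpow m).ne'
  have hD : 1 - z + z ^ 2 - z ^ 2 * B (m + 1 - 1) z
      = z * (a ^ (m + 3) - b ^ (m + 3)) / (a ^ (m + 2) - b ^ (m + 2)) := by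
    have hrec : a ^ (m + 3) - b ^ (m + 3)
        = (a + b) * (a ^ (m + 2) - b ^ (m + 2)) - (a ^ (m + 1) - b ^ (m + 1)) := by
      linear_combination (b ^ (m + 1) - a ^ (m + 1)) * hab
    have hm : m + 1 - 1 = m := rfl
    have hsz : 1 - z + z ^ 2 = z * (a + b) := by
      rw [hsum]; field_simp
    rw [hm, B, ← ha_def, ← hb_def, hsz, hrec]
    field_simp
  refine ⟨hzne, ?_, ?_, ?_, ?_⟩
  · simpa using h1
  · simpa [pow_succ] using h2
  · rw [hD]
    positivity
  · rw [hD, B, ← ha_def, ← hb_def]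
    rw [one_div_div]
    field_simp
end

section
/- Define real numbers D_ℓ(z) for ℓ ≥ −1 by D_{−1}(z) = 1, D₀(z) = z − z² − 1, and D_ℓ(z) = (z − z² − 1)·D_{ℓ−1}(z) − z²·D_{ℓ−2}(z) for ℓ ≥ 1. Then for every integer ℓ ≥ 0 and every real z with 0 < z < ρ = (3−√5)/2, one has D_ℓ(z) ≠ 0 and −D_{ℓ−1}(z)/D_ℓ(z) = (1/z)·(s₁(z)^{ℓ+1} − s₂(z)^{ℓ+1})/(s₁(z)^{ℓ+2} − s₂(z)^{ℓ+2}). -/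
/-- `Dd z j = D_{j-1}(z)`: the shifted sequence of determinants, with
`D_{−1} = 1`, `D₀ = z − z² − 1` and
`D_ℓ = (z − z² − 1)·D_{ℓ−1} − z²·D_{ℓ−2}` for `ℓ ≥ 1`. -/
noncomputable def Dd (z : ℝ) : ℕ → ℝ
  | 0 => 1
  | 1 => z - z ^ 2 - 1
  | (j + 2) => (z - z ^ 2 - 1) * Dd z (j + 1) - z ^ 2 * Dd z j

/-- For `0 < z < ρ` and every `ℓ ≥ 0`, `D_ℓ(z) ≠ 0` and
`−D_{ℓ−1}(z)/D_ℓ(z) = (1/z)·(s₁^{ℓ+1} − s₂^{ℓ+1})/(s₁^{ℓ+2} − s₂^{ℓ+2})`. -/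
theorem det_ratio_formula (ℓ : ℕ) (z : ℝ) (hz0 : 0 < z) (hz1 : z < (3 - Real.sqrt 5) / 2) :
    Dd z (ℓ + 1) ≠ 0 ∧
    -Dd z ℓ / Dd z (ℓ + 1)
      = 1 / z * (s1 z ^ (ℓ + 1) - s2 z ^ (ℓ + 1)) / (s1 z ^ (ℓ + 2) - s2 z ^ (ℓ + 2)) := by
  have hzne : z ≠ 0 := hz0.ne'
  have h5 : Real.sqrt 5 ^ 2 = 5 := Real.sq_sqrt (by norm_num)
  have h3 : Real.sqrt 5 < 3 := by nlinarith [Real.sqrt_nonneg 5]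
  have hprod : 0 < (1 + z + z ^ 2) * (1 - 3 * z + z ^ 2) := by
    have h1 : 0 < 1 - 3 * z + z ^ 2 := by
      nlinarith [mul_pos (by linarith : (0:ℝ) < (3 - Real.sqrt 5) / 2 - z)
        (by nlinarith [Real.sqrt_nonneg 5] : (0:ℝ) < (3 + Real.sqrt 5) / 2 - z)]
    nlinarith
  have hW2 : W z ^ 2 = (1 + z + z ^ 2) * (1 - 3 * z + z ^ 2) := Real.sq_sqrt hprod.le
  have hWpos : 0 < W z := Real.sqrt_pos.mpr hprod
  -- basic facts about s1, s2
  have hs2pos : 0 < s2 z := by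
    have ht : 0 < 1 - z + z ^ 2 := by nlinarith [sq_nonneg (2 * z - 1)]
    have h1 : 0 < 1 - z + z ^ 2 - W z := by nlinarith [hW2, hWpos, ht, mul_pos hz0 hz0]
    unfold s2; positivity
  have hdiff : s1 z - s2 z = W z / z := by
    unfold s1 s2; field_simp; ring
  have hs12 : s2 z < s1 z := by
    rw [← sub_pos, hdiff]; positivity
  -- characteristic roots A = -(z*s1), B = -(z*s2)
  have hA : -(z * s1 z) + -(z * s2 z) = z - z ^ 2 - 1 := by
    unfold s1 s2; field_simp; ring
  have hB : -(z * s1 z) * -(z * s2 z) = z ^ 2 := by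
    unfold s1 s2; field_simp; nlinarith [hW2]
  have hD0 : -(W z) = -(z * s1 z) - -(z * s2 z) := by
    unfold s1 s2; field_simp; ring
  have key : ∀ j : ℕ, -(W z) * Dd z j = (-(z * s1 z)) ^ (j + 1) - (-(z * s2 z)) ^ (j + 1) := by
    intro j
    induction j using Nat.twoStepInduction with
    | zero => simpa [Dd] using hD0
    | one =>
      show -(W z) * (z - z ^ 2 - 1) = _
      linear_combination (z - z ^ 2 - 1) * hD0 - (-(z * s1 z) - -(z * s2 z)) * hA
    | more j ih1 ih2 =>
      show -(W z) * ((z - z ^ 2 - 1) * Dd z (j + 1) - z ^ 2 * Dd z j) = _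
      linear_combination (z - z ^ 2 - 1) * ih2 - z ^ 2 * ih1
        - ((-(z * s1 z)) ^ (j + 2) - (-(z * s2 z)) ^ (j + 2)) * hA
        + ((-(z * s1 z)) ^ (j + 1) - (-(z * s2 z)) ^ (j + 1)) * hB
  -- rewrite key in separated form
  have key' : ∀ j : ℕ, -(W z) * Dd z j = (-z) ^ (j + 1) * (s1 z ^ (j + 1) - s2 z ^ (j + 1)) := by
    intro j
    rw [key j]
    rw [show -(z * s1 z) = (-z) * s1 z by ring, show -(z * s2 z) = (-z) * s2 z by ring,
      mul_pow, mul_pow]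
    ring
  have hS2pos : 0 < s1 z ^ (ℓ + 2) - s2 z ^ (ℓ + 2) := by
    have := pow_lt_pow_left₀ hs12 hs2pos.le (n := ℓ + 2) (by omega)
    linarith
  have hS1pos : 0 < s1 z ^ (ℓ + 1) - s2 z ^ (ℓ + 1) := by
    have := pow_lt_pow_left₀ hs12 hs2pos.le (n := ℓ + 1) (by omega)
    linarith
  have hDne : Dd z (ℓ + 1) ≠ 0 := by
    intro h
    have := key' (ℓ + 1)
    rw [h, mul_zero] at this
    have hz' : (-z) ^ (ℓ + 1 + 1) ≠ 0 := pow_ne_zero _ (by simpa using hzne)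
    have := (mul_eq_zero.mp this.symm).resolve_left hz'
    linarith
  refine ⟨hDne, ?_⟩
  have k1 := key' ℓ
  have k2 := key' (ℓ + 1)
  rw [pow_succ (-z) (ℓ + 1)] at k2
  have hs1e : s1 z ^ (ℓ + 2) = s1 z ^ (ℓ + 1) * s1 z := pow_succ _ _
  have hs2e : s2 z ^ (ℓ + 2) = s2 z ^ (ℓ + 1) * s2 z := pow_succ _ _
  rw [div_eq_div_iff hDne hS2pos.ne']
  rw [show 1 / z * (s1 z ^ (ℓ + 1) - s2 z ^ (ℓ + 1)) * Dd z (ℓ + 1)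
      = (s1 z ^ (ℓ + 1) - s2 z ^ (ℓ + 1)) * Dd z (ℓ + 1) / z by ring,
    eq_div_iff hzne]
  rw [hs1e, hs2e] at k2 ⊢
  have hWne : -(W z) ≠ 0 := neg_ne_zero.mpr hWpos.ne'
  apply mul_left_cancel₀ hWne
  linear_combination (-(z * (s1 z ^ (ℓ + 1) * s1 z - s2 z ^ (ℓ + 1) * s2 z))) * k1
    - (s1 z ^ (ℓ + 1) - s2 z ^ (ℓ + 1)) * k2
end

section
/- As x → 1 from the left (for real x with 0 < x < 1), one has ∑_{k≥1} x^k/(1−x^k) ~ −log(1−x)/(1−x); that is, the function x ↦ (∑_{k≥1} x^k/(1−x^k))·(1−x)/(−log(1−x)) tends to 1 as x → 1⁻. -/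
open Real Filter

private lemma pow_one_sub_le_aux (u : ℝ) (hu0 : 0 ≤ u) (hu1 : u ≤ 1) :
    ∀ n : ℕ, (1 - u) ^ n ≤ 1 - n * u + n ^ 2 * u ^ 2 / 2 := by
  intro n
  induction n with
  | zero => norm_num
  | succ n ih =>
    have h1 : (0:ℝ) ≤ 1 - u := by linarith
    have h3 : (1 - u) * (1 - u) ^ n ≤ (1 - u) * (1 - n * u + n ^ 2 * u ^ 2 / 2) :=
      mul_le_mul_of_nonneg_left ih h1
    have hn : (0:ℝ) ≤ n := Nat.cast_nonneg n
    have h2 : (1 - u) ^ (n + 1) = (1 - u) * (1 - u) ^ n := by ring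
    push_cast
    nlinarith [sq_nonneg u, mul_nonneg (mul_nonneg (mul_nonneg hn hn) hu0) (sq_nonneg u)]

private lemma half_le_aux (u : ℝ) (hu0 : 0 < u) (hu1 : u < 1) (n : ℕ) (h1 : 1 ≤ (n:ℝ) * u) :
    (1 - u) ^ n ≤ 1 / 2 := by
  have h2 : (1 - u : ℝ) ≤ Real.exp (-u) := by linarith [Real.add_one_le_exp (-u)]
  have h3 : (1 - u) ^ n ≤ Real.exp (-u) ^ n := pow_le_pow_left₀ (by linarith) h2 n
  have h4 : Real.exp (-u) ^ n = Real.exp ((n : ℝ) * (-u)) := (Real.exp_nat_mul _ n).symm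
  have h5 : Real.exp ((n:ℝ) * (-u)) ≤ Real.exp (-1) := Real.exp_le_exp.mpr (by nlinarith)
  have h6 : Real.exp (-1 : ℝ) ≤ 1 / 2 := by
    have he : (2:ℝ) ≤ Real.exp 1 := by linarith [Real.add_one_le_exp (1:ℝ)]
    rw [Real.exp_neg]
    rw [inv_le_comm₀ (Real.exp_pos 1) (by norm_num)]
    linarith
  calc (1 - u) ^ n ≤ Real.exp (-u) ^ n := h3
    _ = Real.exp ((n:ℝ) * (-u)) := h4
    _ ≤ Real.exp (-1) := h5
    _ ≤ 1 / 2 := h6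

private lemma term_bounds (x : ℝ) (hx0 : 0 < x) (hx1 : x < 1) (n : ℕ) (hn : 1 ≤ n) :
    x ^ n / n ≤ x ^ n * (1 - x) / (1 - x ^ n) ∧
      x ^ n * (1 - x) / (1 - x ^ n) ≤ x ^ n / n + 2 * (1 - x) * x ^ n := by
  obtain ⟨u, hu⟩ : ∃ u : ℝ, u = 1 - x := ⟨1 - x, rfl⟩
  have hu0 : 0 < u := by rw [hu]; linarith
  have hu1 : u < 1 := by rw [hu]; linarith
  have hxu : x = 1 - u := by rw [hu]; ring
  rw [← hu]
  have hxn1 : x ^ n < 1 := pow_lt_one₀ hx0.le hx1 (by omega)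
  have hp : 0 < 1 - x ^ n := by linarith
  have hxn0 : 0 < x ^ n := pow_pos hx0 n
  have hn0 : (0:ℝ) < (n:ℝ) := by exact_mod_cast Nat.pos_of_ne_zero (by omega)
  -- Bernoulli: 1 - n*u ≤ (1-u)^n, i.e., 1 - x^n ≤ n*u
  have hbern : 1 - (n:ℝ) * u ≤ x ^ n := by
    have h := one_add_mul_le_pow (a := -u) (by linarith) n
    have h2 : (1:ℝ) + -u = 1 - u := by ring
    rw [h2] at h
    rw [hxu]; linarith [h]
  have hle : 1 - x ^ n ≤ (n:ℝ) * u := by linarith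
  constructor
  · rw [div_le_div_iff₀ hn0 hp]
    nlinarith [mul_le_mul_of_nonneg_left hle hxn0.le]
  · -- key : u / (1 - x^n) ≤ 1/n + 2*u
    have key : u / (1 - x ^ n) ≤ 1 / (n:ℝ) + 2 * u := by
      rw [div_le_iff₀ hp]
      have hmain : (n:ℝ) * u ≤ (1 + 2 * (n:ℝ) * u) * (1 - x ^ n) := by
        rcases le_or_gt ((n:ℝ) * u) 1 with hc | hc
        · have hq : x ^ n ≤ 1 - (n:ℝ) * u + (n:ℝ) ^ 2 * u ^ 2 / 2 := by
            rw [hxu]; exact pow_one_sub_le_aux u hu0.le hu1.le n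
          have hp2 : (n:ℝ) * u - (n:ℝ) ^ 2 * u ^ 2 / 2 ≤ 1 - x ^ n := by linarith
          have hsq : (n:ℝ) ^ 2 * u ^ 2 ≤ (n:ℝ) * u := by
            nlinarith [mul_pos hn0 hu0]
          have hhalf : (n:ℝ) * u / 2 ≤ 1 - x ^ n := by linarith [hsq, hp2]
          nlinarith [mul_le_mul_of_nonneg_left hhalf (by positivity : (0:ℝ) ≤ 2 * ((n:ℝ) * u)),
            sq_nonneg ((n:ℝ) * u)]
        · have hp2 : (1:ℝ) / 2 ≤ 1 - x ^ n := by
            have := half_le_aux u hu0 hu1 n hc.le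
            rw [hxu]; linarith [this]
          nlinarith [mul_le_mul_of_nonneg_left hp2 (by positivity : (0:ℝ) ≤ 2 * ((n:ℝ) * u)),
            mul_pos hn0 hu0]
      have hexp : ((1 / (n:ℝ) + 2 * u) * (1 - x ^ n)) * (n:ℝ)
          = (1 + 2 * (n:ℝ) * u) * (1 - x ^ n) := by
        have hinv : (1 / (n:ℝ)) * (n:ℝ) = 1 := one_div_mul_cancel hn0.ne'
        linear_combination (1 - x ^ n) * hinv
      have hfin : u * (n:ℝ) ≤ ((1 / (n:ℝ) + 2 * u) * (1 - x ^ n)) * (n:ℝ) := by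
        rw [hexp]; linarith [hmain]
      exact le_of_mul_le_mul_right hfin hn0
    have h1 : x ^ n * u / (1 - x ^ n) = x ^ n * (u / (1 - x ^ n)) := by
      ring
    have h2 : x ^ n / n + 2 * u * x ^ n = x ^ n * (1 / (n:ℝ) + 2 * u) := by
      ring
    rw [h1, h2]
    exact mul_le_mul_of_nonneg_left key hxn0.le

private lemma key_bounds (x : ℝ) (hx : x ∈ Set.Ioo (0:ℝ) 1) :
    -Real.log (1 - x) ≤ (∑' k : ℕ, x ^ (k + 1) / (1 - x ^ (k + 1))) * (1 - x) ∧
      (∑' k : ℕ, x ^ (k + 1) / (1 - x ^ (k + 1))) * (1 - x) ≤ -Real.log (1 - x) + 2 := by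
  obtain ⟨hx0, hx1⟩ := hx
  have hxabs : |x| < 1 := abs_lt.mpr ⟨by linarith, hx1⟩
  have hlog := Real.hasSum_pow_div_log_of_abs_lt_one hxabs
  have ha : Summable (fun k : ℕ => x ^ (k + 1) / ((k:ℝ) + 1)) := hlog.summable
  have hp : ∀ k : ℕ, 0 < 1 - x ^ (k + 1) := fun k =>
    sub_pos.mpr (pow_lt_one₀ hx0.le hx1 (Nat.succ_ne_zero k))
  have hgeo : Summable (fun k : ℕ => x ^ (k + 1)) := by
    simpa [pow_succ] using (summable_geometric_of_lt_one hx0.le hx1).mul_right x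
  have hcle : ∀ k : ℕ, x ^ (k + 1) * (1 - x) / (1 - x ^ (k + 1)) ≤ x ^ (k + 1) := by
    intro k
    rw [div_le_iff₀ (hp k)]
    have hxx : x ^ (k + 1) ≤ x := by
      calc x ^ (k + 1) ≤ x ^ 1 := pow_le_pow_of_le_one hx0.le hx1.le (by omega)
        _ = x := pow_one x
    nlinarith [pow_pos hx0 (k + 1)]
  have hc : Summable (fun k : ℕ => x ^ (k + 1) * (1 - x) / (1 - x ^ (k + 1))) := by
    apply Summable.of_nonneg_of_le _ hcle hgeo
    intro k
    exact div_nonneg (by nlinarith [pow_pos hx0 (k + 1)]) (hp k).le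
  have hbounds : ∀ k : ℕ,
      x ^ (k + 1) / ((k:ℝ) + 1) ≤ x ^ (k + 1) * (1 - x) / (1 - x ^ (k + 1)) ∧
        x ^ (k + 1) * (1 - x) / (1 - x ^ (k + 1)) ≤
          x ^ (k + 1) / ((k:ℝ) + 1) + 2 * (1 - x) * x ^ (k + 1) := by
    intro k
    have := term_bounds x hx0 hx1 (k + 1) (by omega)
    push_cast at this ⊢
    exact this
  have hrw : (∑' k : ℕ, x ^ (k + 1) / (1 - x ^ (k + 1))) * (1 - x)
      = ∑' k : ℕ, x ^ (k + 1) * (1 - x) / (1 - x ^ (k + 1)) := by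
    rw [← tsum_mul_right]
    congr 1
    funext k
    ring
  have hgeosum : ∑' k : ℕ, 2 * (1 - x) * x ^ (k + 1) = 2 * x := by
    have h1 : ∀ k : ℕ, 2 * (1 - x) * x ^ (k + 1) = (2 * (1 - x) * x) * x ^ k := by
      intro k; ring
    rw [tsum_congr h1, tsum_mul_left, tsum_geometric_of_lt_one hx0.le hx1]
    have hne : (1:ℝ) - x ≠ 0 := by linarith
    field_simp
  constructor
  · rw [hrw, ← hlog.tsum_eq]
    exact Summable.tsum_le_tsum (fun k => (hbounds k).1) ha hc
  · rw [hrw, ← hlog.tsum_eq]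
    have h2 : Summable (fun k : ℕ => x ^ (k + 1) / ((k:ℝ) + 1) + 2 * (1 - x) * x ^ (k + 1)) :=
      ha.add (hgeo.mul_left _)
    have h3 := Summable.tsum_le_tsum (fun k => (hbounds k).2) hc h2
    rw [Summable.tsum_add ha (hgeo.mul_left _)] at h3
    have h4 : ∑' k : ℕ, 2 * (1 - x) * x ^ (k + 1) ≤ 2 := by
      rw [hgeosum]; linarith
    linarith

/-- As `x → 1⁻` (through `x ∈ (0,1)`), `∑_{k≥1} x^k/(1−x^k) ~ −log(1−x)/(1−x)`:
the quotient tends to `1`. -/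
theorem lambert_sum_asymptotics :
    Filter.Tendsto
      (fun x : ℝ => (∑' k : ℕ, x ^ (k + 1) / (1 - x ^ (k + 1))) * (1 - x) / (-Real.log (1 - x)))
      (nhdsWithin 1 (Set.Ioo 0 1)) (nhds 1) := by
  have hL : Tendsto (fun x : ℝ => -Real.log (1 - x)) (nhdsWithin 1 (Set.Ioo 0 1)) atTop := by
    have h1 : Tendsto (fun x : ℝ => 1 - x) (nhdsWithin 1 (Set.Ioo 0 1))
        (nhdsWithin 0 (Set.Ioi 0)) := by
      apply tendsto_nhdsWithin_of_tendsto_nhds_of_eventually_within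
      · have h : Tendsto (fun x : ℝ => 1 - x) (nhds 1) (nhds 0) :=
          (continuous_sub_left (1:ℝ)).tendsto' 1 0 (by norm_num)
        exact h.mono_left nhdsWithin_le_nhds
      · filter_upwards [self_mem_nhdsWithin] with x hx
        exact sub_pos.mpr hx.2
    exact tendsto_neg_atBot_atTop.comp (Real.tendsto_log_nhdsGT_zero.comp h1)
  have hLpos : ∀ x ∈ Set.Ioo (0:ℝ) 1, 0 < -Real.log (1 - x) := by
    rintro x ⟨hx0, hx1⟩
    have : Real.log (1 - x) < 0 := Real.log_neg (by linarith) (by linarith)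
    linarith
  have hupper : Tendsto (fun x : ℝ => 1 + 2 / (-Real.log (1 - x)))
      (nhdsWithin 1 (Set.Ioo 0 1)) (nhds 1) := by
    have h0 : Tendsto (fun x : ℝ => (2:ℝ) / (-Real.log (1 - x)))
        (nhdsWithin 1 (Set.Ioo 0 1)) (nhds 0) := tendsto_const_nhds.div_atTop hL
    simpa using tendsto_const_nhds.add h0
  apply tendsto_of_tendsto_of_tendsto_of_le_of_le'
    (tendsto_const_nhds : Tendsto (fun _ : ℝ => (1:ℝ)) _ _) hupper
  · filter_upwards [self_mem_nhdsWithin] with x hx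
    exact (one_le_div (hLpos x hx)).mpr (key_bounds x hx).1
  · filter_upwards [self_mem_nhdsWithin] with x hx
    have hL0 := hLpos x hx
    rw [div_le_iff₀ hL0, add_mul, one_mul, div_mul_cancel₀ _ hL0.ne']
    linarith [(key_bounds x hx).2]
end
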